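/- Let F be a number field and let P be a prime ideal of O_F lying above 2. Let λ, μ ∈ F be nonzero elements with λ + μ = 1 and λ·μ ≠ 1, and suppose max{|v_P(λ)|, |v_P(μ)|} ≤ 4·v_P(2). Then v_P(2⁸·(1 − λ·μ)³ / (λ·μ)²) ≥ 0. -/

import Mathlib

open IsDedekindDomain NumberField

-- The additive `P`-adic valuation on a number field `F`, normalized so that a uniformizer
-- has valuation `1`; by convention `vP P 0 = 0`.
open scoped Classical in
noncomputable def vP {F : Type*} [Field F] [NumberField F]
    (P : HeightOneSpectrum (𝓞 F)) (x : F) : ℤ :=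
  if hx : x = 0 then 0
  else - Multiplicative.toAdd (WithZero.unzero ((Valuation.ne_zero_iff (P.valuation F)).mpr hx))

-- A number field is totally real if all its infinite places are real.
def TotallyReal (F : Type*) [Field F] [NumberField F] : Prop :=
  ∀ v : NumberField.InfinitePlace F, v.IsReal

/-! With `a = v_P(λ)`, `b = v_P(μ)` and `e = v_P(2)`, the valuation of the `j`-invariant is
`8e + 3 v_P(1 - λμ) - 2(a + b)`. The ultrametric inequality applied to `λ + μ = 1`,
`λ = 1 - μ` and `μ = 1 - λ` leaves two cases: either `a, b ≥ 0` and one of them vanishes, so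
`a + b ≤ 4e` and `v_P(1 - λμ) ≥ 0`; or `a = b < 0`, so `v_P(1 - λμ) ≥ 2a` and the valuation
is at least `8e + 2a ≥ 0`. -/

section

variable {F : Type*} [Field F] [NumberField F] (P : HeightOneSpectrum (𝓞 F))

theorem vP_eq_neg_log (x : F) : vP P x = -WithZero.log (P.valuation F x) := by
  unfold vP
  split_ifs with hx
  · simp [hx]
  · rw [WithZero.toAdd_unzero_eq_log]

@[simp]
theorem vP_one : vP P (1 : F) = 0 := by
  simp [vP_eq_neg_log]

@[simp]
theorem vP_neg (x : F) : vP P (-x) = vP P x := by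
  simp [vP_eq_neg_log]

theorem vP_mul {x y : F} (hx : x ≠ 0) (hy : y ≠ 0) : vP P (x * y) = vP P x + vP P y := by
  simp only [vP_eq_neg_log, map_mul]
  rw [WithZero.log_mul (by simpa using hx) (by simpa using hy)]
  ring

theorem vP_pow (x : F) (n : ℕ) : vP P (x ^ n) = n * vP P x := by
  simp [vP_eq_neg_log]

theorem vP_div {x y : F} (hx : x ≠ 0) (hy : y ≠ 0) : vP P (x / y) = vP P x - vP P y := by
  simp only [vP_eq_neg_log, map_div₀]
  rw [WithZero.log_div (by simpa using hx) (by simpa using hy)]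
  ring

theorem vP_min_le_add {x y : F} (hxy : x + y ≠ 0) : min (vP P x) (vP P y) ≤ vP P (x + y) := by
  have hxy' : P.valuation F (x + y) ≠ 0 := by simpa using hxy
  rcases le_max_iff.mp ((P.valuation F).map_add x y) with h | h
  · have hx : P.valuation F x ≠ 0 := ne_bot_of_le_ne_bot hxy' h
    exact min_le_of_left_le <| by simpa [vP_eq_neg_log, hx, hxy'] using h
  · have hy : P.valuation F y ≠ 0 := ne_bot_of_le_ne_bot hxy' h
    exact min_le_of_right_le <| by simpa [vP_eq_neg_log, hy, hxy'] using h

theorem vP_min_le_one_sub {x : F} (hx : 1 - x ≠ 0) : min 0 (vP P x) ≤ vP P (1 - x) := by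
  simpa [sub_eq_add_neg] using vP_min_le_add P (x := 1) (y := -x) (by rwa [← sub_eq_add_neg])

theorem vP_legendre_jInvariant {m : F} (hm : m ≠ 0) (hm1 : 1 - m ≠ 0) :
    vP P (2 ^ 8 * (1 - m) ^ 3 / m ^ 2) = 8 * vP P (2 : F) + 3 * vP P (1 - m) - 2 * vP P m := by
  rw [vP_div P (mul_ne_zero (by norm_num) (pow_ne_zero 3 hm1)) (pow_ne_zero 2 hm),
    vP_mul P (by norm_num) (pow_ne_zero 3 hm1), vP_pow, vP_pow, vP_pow]
  push_cast
  ring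

end

theorem legendre_jinvariant_integral_at_2_general
    (F : Type*) [Field F] [NumberField F]
    (P : HeightOneSpectrum (𝓞 F))
    (lam mu : F) (hlam0 : lam ≠ 0) (hmu0 : mu ≠ 0)
    (hsum : lam + mu = 1) (hne1 : lam * mu ≠ 1)
    (hbound : max |vP P lam| |vP P mu| ≤ 4 * vP P (2 : F)) :
    0 ≤ vP P (2 ^ 8 * (1 - lam * mu) ^ 3 / (lam * mu) ^ 2) := by
  have hm1 : 1 - lam * mu ≠ 0 := sub_ne_zero.mpr hne1.symm
  rw [vP_legendre_jInvariant P (mul_ne_zero hlam0 hmu0) hm1, vP_mul P hlam0 hmu0]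
  have h_one : min (vP P lam) (vP P mu) ≤ 0 := by
    simpa [hsum] using vP_min_le_add P (x := lam) (y := mu) (by simp [hsum])
  have h_lam : min 0 (vP P mu) ≤ vP P lam := by
    simpa [← hsum] using vP_min_le_one_sub P (x := mu) (by simpa [← hsum] using hlam0)
  have h_mu : min 0 (vP P lam) ≤ vP P mu := by
    simpa [← hsum] using vP_min_le_one_sub P (x := lam) (by simpa [← hsum] using hmu0)
  have h_prod : min 0 (vP P lam + vP P mu) ≤ vP P (1 - lam * mu) := by
    simpa [vP_mul P hlam0 hmu0] using vP_min_le_one_sub P hm1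
  have h_lam_le := abs_le.mp ((le_max_left _ _).trans hbound)
  have h_mu_le := abs_le.mp ((le_max_right _ _).trans hbound)
  omega

/-- the valuation computation from the proof of Theorem 2.2 of the paper,
showing that the `j`-invariant `2⁸·(1 − λμ)³/(λμ)²` of the Legendre curve, where
`λ + μ = 1`, is integral at a prime `P` above `2`. -/
theorem legendre_jinvariant_integral_at_2
    (F : Type*) [Field F] [NumberField F]
    (P : HeightOneSpectrum (𝓞 F)) (hP2 : (2 : 𝓞 F) ∈ P.asIdeal)
    (lam mu : F) (hlam0 : lam ≠ 0) (hmu0 : mu ≠ 0)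
    (hsum : lam + mu = 1) (hne1 : lam * mu ≠ 1)
    (hbound : max |vP P lam| |vP P mu| ≤ 4 * vP P (2 : F)) :
    0 ≤ vP P (2 ^ 8 * (1 - lam * mu) ^ 3 / (lam * mu) ^ 2) :=
  legendre_jinvariant_integral_at_2_general F P lam mu hlam0 hmu0 hsum hne1 hbound
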